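/- Let H be an m×m real symmetric positive definite matrix, let m ≤ n, and let W ∈ R^{m×n} be nonzero with G = H W of full row rank. With the optimal step size η* = ‖H W‖₁ / Tr(H), the whitened update W' = W − η* (G Gᵀ)^{-1/2} G satisfies the exact contraction identity (L(W') − L*)/(L(W) − L*) = 1 − ‖H W‖₁² / ( Tr(Wᵀ H W) · Tr(H) ), where L(W) = (1/2)·Tr(Wᵀ H W), L* = 0, and ‖·‖₁ is the Schatten 1-norm. -/

import Mathlib

/-! Write `G = H W`, `S = (G Gᵀ)^{1/2}` and `U = S⁻¹ G` for the whitened direction. Since `S` is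
symmetric with `S² = G Gᵀ`, we get `G Uᵀ = S` and `U Uᵀ = 1`. For symmetric `H` the loss along
`W - η U` is therefore the quadratic `L(W) - η Tr(G Uᵀ) + η²/2 · Tr(H U Uᵀ) = L(W) - η ‖G‖₁ + η²/2 · Tr H`,
whose value at `η* = ‖G‖₁ / Tr H` is `L(W) - ‖G‖₁² / (2 Tr H)`. Dividing by
`L(W) = Tr(Wᵀ H W) / 2 > 0` gives the identity. -/

open Matrix

open Classical in
/-- The unique positive semidefinite square root of a positive semidefinite matrix
(junk value `0` if `A` is not positive semidefinite). -/
noncomputable def matSqrt {m : ℕ} (A : Matrix (Fin m) (Fin m) ℝ) : Matrix (Fin m) (Fin m) ℝ :=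
  if h : A.PosSemidef then
    (h.1.eigenvectorUnitary : Matrix (Fin m) (Fin m) ℝ) *
      diagonal ((↑) ∘ (Real.sqrt ∘ h.1.eigenvalues)) *
      (star h.1.eigenvectorUnitary : Matrix (Fin m) (Fin m) ℝ)
  else 0

/-- The GradWhitening operator `A ↦ (A Aᵀ)^{-1/2} A`. -/
noncomputable def whiten {m n : ℕ} (A : Matrix (Fin m) (Fin n) ℝ) : Matrix (Fin m) (Fin n) ℝ :=
  (matSqrt (A * Aᵀ))⁻¹ * A

/-- The Schatten 1-norm (sum of singular values): `‖A‖₁ = Tr((A Aᵀ)^{1/2})`. -/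
noncomputable def schattenOne {m n : ℕ} (A : Matrix (Fin m) (Fin n) ℝ) : ℝ :=
  (matSqrt (A * Aᵀ)).trace

/-- The quadratic loss `L(W) = (1/2) * Tr(Wᵀ H W)`. -/
noncomputable def loss {m n : ℕ} (H : Matrix (Fin m) (Fin m) ℝ)
    (W : Matrix (Fin m) (Fin n) ℝ) : ℝ :=
  (1 / 2) * (Wᵀ * H * W).trace

theorem Matrix.isUnit_of_rank_eq_card {K ι : Type*} [Field K] [Fintype ι] [DecidableEq ι]
    {A : Matrix ι ι K} (h : A.rank = Fintype.card ι) : IsUnit A := by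
  have hrange : LinearMap.range A.mulVecLin = ⊤ :=
    Submodule.eq_top_of_finrank_eq (by rw [← rank, h, Module.finrank_fintype_fun_eq_card])
  exact mulVec_surjective_iff_isUnit.mp (LinearMap.range_eq_top.mp hrange)

theorem Matrix.posSemidef_self_mul_transpose {ι κ : Type*} [Fintype ι] [Fintype κ]
    (G : Matrix ι κ ℝ) : (G * Gᵀ).PosSemidef := by
  simpa only [conjTranspose_eq_transpose_of_trivial] using posSemidef_self_mul_conjTranspose G

theorem Matrix.PosDef.trace_transpose_mul_mul_pos {ι κ : Type*} [Fintype ι] [Fintype κ]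
    {H : Matrix ι ι ℝ} (hH : H.PosDef) {W : Matrix ι κ ℝ} (hW : W ≠ 0) :
    0 < (Wᵀ * H * W).trace := by
  have hdiag (j : κ) : (Wᵀ * H * W) j j = star (Wᵀ j) ⬝ᵥ H *ᵥ Wᵀ j := by
    rw [mul_apply', mul_apply_eq_vecMul, dotProduct_mulVec]; rfl
  obtain ⟨j, hj⟩ := Function.ne_iff.mp (mt transpose_eq_zero.mp hW)
  refine Finset.sum_pos' (fun k _ => ?_) ⟨j, Finset.mem_univ j, ?_⟩
  · simpa only [diag, hdiag] using hH.posSemidef.dotProduct_mulVec_nonneg (Wᵀ k)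
  · simpa only [diag, hdiag] using hH.dotProduct_mulVec_pos hj

section Whitening

variable {m n : ℕ}

theorem matSqrt_mul_self {A : Matrix (Fin m) (Fin m) ℝ} (hA : A.PosSemidef) :
    matSqrt A * matSqrt A = A := by
  conv_rhs => rw [hA.1.spectral_theorem, Unitary.conjStarAlgAut_apply]
  rw [matSqrt, dif_pos hA]
  simp only [Matrix.mul_assoc]
  rw [← Matrix.mul_assoc _ (hA.1.eigenvectorUnitary : Matrix (Fin m) (Fin m) ℝ),
    Unitary.coe_star_mul_self, Matrix.one_mul, ← Matrix.mul_assoc (diagonal _),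
    diagonal_mul_diagonal]
  congr 3
  funext i
  simp [Real.mul_self_sqrt (hA.eigenvalues_nonneg i)]

theorem transpose_matSqrt (A : Matrix (Fin m) (Fin m) ℝ) : (matSqrt A)ᵀ = matSqrt A := by
  unfold matSqrt
  split_ifs
  · simp [← conjTranspose_eq_transpose_of_trivial, conjTranspose_mul, Matrix.mul_assoc,
      star_eq_conjTranspose]
  · rfl

theorem isUnit_matSqrt {A : Matrix (Fin m) (Fin m) ℝ} (hA : A.PosSemidef) (hAu : IsUnit A) :
    IsUnit (matSqrt A) :=
  isUnit_of_mul_isUnit_left (by rwa [matSqrt_mul_self hA])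

theorem mul_transpose_whiten {G : Matrix (Fin m) (Fin n) ℝ} (hG : IsUnit (G * Gᵀ)) :
    G * (whiten G)ᵀ = matSqrt (G * Gᵀ) := by
  have hS := isUnit_matSqrt (posSemidef_self_mul_transpose G) hG
  have hSS := matSqrt_mul_self (posSemidef_self_mul_transpose G)
  set S := matSqrt (G * Gᵀ)
  calc G * (whiten G)ᵀ = G * Gᵀ * S⁻¹ := by
        rw [whiten, transpose_mul, transpose_nonsing_inv, transpose_matSqrt, Matrix.mul_assoc]
    _ = S := by rw [← hSS, mul_nonsing_inv_cancel_right _ _ ((isUnit_iff_isUnit_det _).mp hS)]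

theorem whiten_mul_transpose_whiten {G : Matrix (Fin m) (Fin n) ℝ} (hG : IsUnit (G * Gᵀ)) :
    whiten G * (whiten G)ᵀ = 1 := by
  have hS := isUnit_matSqrt (posSemidef_self_mul_transpose G) hG
  nth_rw 1 [whiten]
  rw [Matrix.mul_assoc, mul_transpose_whiten hG,
    nonsing_inv_mul _ ((isUnit_iff_isUnit_det _).mp hS)]

theorem trace_mul_transpose_whiten {G : Matrix (Fin m) (Fin n) ℝ} (hG : IsUnit (G * Gᵀ)) :
    (G * (whiten G)ᵀ).trace = schattenOne G := by
  rw [mul_transpose_whiten hG, schattenOne]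

theorem loss_sub_smul {H : Matrix (Fin m) (Fin m) ℝ} (hH : H.IsSymm)
    (W U : Matrix (Fin m) (Fin n) ℝ) (η : ℝ) :
    loss H (W - η • U) =
      loss H W - η * (H * W * Uᵀ).trace + η ^ 2 / 2 * (H * (U * Uᵀ)).trace := by
  have hcross : (Uᵀ * H * W).trace = (H * W * Uᵀ).trace := by
    rw [Matrix.mul_assoc, trace_mul_comm]
  have hcross' : (Wᵀ * H * U).trace = (H * W * Uᵀ).trace := by
    rw [← trace_transpose, transpose_mul, transpose_mul, transpose_transpose, hH.eq,
      ← Matrix.mul_assoc, hcross]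
  have hquad : (Uᵀ * H * U).trace = (H * (U * Uᵀ)).trace := by
    rw [trace_mul_cycle, trace_mul_comm]
  simp only [loss, transpose_sub, transpose_smul, Matrix.sub_mul, Matrix.mul_sub,
    Matrix.smul_mul, Matrix.mul_smul, trace_sub, trace_smul, smul_eq_mul, hcross, hcross', hquad]
  ring

theorem loss_sub_smul_whiten {H : Matrix (Fin m) (Fin m) ℝ} (hH : H.IsSymm)
    {W : Matrix (Fin m) (Fin n) ℝ} (hG : IsUnit (H * W * (H * W)ᵀ)) (η : ℝ) :
    loss H (W - η • whiten (H * W)) =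
      loss H W - η * schattenOne (H * W) + η ^ 2 / 2 * H.trace := by
  rw [loss_sub_smul hH, trace_mul_transpose_whiten hG, whiten_mul_transpose_whiten hG,
    Matrix.mul_one]

end Whitening

theorem whitened_step_contraction_identity_general {m n : ℕ}
    (H : Matrix (Fin m) (Fin m) ℝ) (hH : H.PosDef)
    (W : Matrix (Fin m) (Fin n) ℝ) (hW : W ≠ 0) (hrank : (H * W).rank = m) :
    (loss H (W - (schattenOne (H * W) / H.trace) • whiten (H * W)) - 0) / (loss H W - 0) =
      1 - schattenOne (H * W) ^ 2 / ((Wᵀ * H * W).trace * H.trace) := by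
  have hG : IsUnit (H * W * (H * W)ᵀ) :=
    isUnit_of_rank_eq_card (by rw [rank_self_mul_transpose, hrank, Fintype.card_fin])
  have hT : (Wᵀ * H * W).trace ≠ 0 := (hH.trace_transpose_mul_mul_pos hW).ne'
  obtain ⟨i, -⟩ := Function.ne_iff.mp hW
  have hh : H.trace ≠ 0 := (haveI : Nonempty (Fin m) := ⟨i⟩; hH.trace_pos).ne'
  rw [loss_sub_smul_whiten (isHermitian_iff_isSymm.mp hH.isHermitian) hG, sub_zero, sub_zero,
    loss]
  field_simp
  ring

/-- Exact contraction identity of the whitened update with the optimal step size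
`η* = ‖H W‖₁ / Tr(H)`:
`(L(W') − L*)/(L(W) − L*) = 1 − ‖H W‖₁² / (Tr(Wᵀ H W) · Tr(H))`, with `L* = 0`. -/
theorem whitened_step_contraction_identity {m n : ℕ} (hmn : m ≤ n)
    (H : Matrix (Fin m) (Fin m) ℝ) (hH : H.PosDef)
    (W : Matrix (Fin m) (Fin n) ℝ) (hW : W ≠ 0) (hrank : (H * W).rank = m) :
    (loss H (W - (schattenOne (H * W) / H.trace) • whiten (H * W)) - 0) / (loss H W - 0) =
      1 - schattenOne (H * W) ^ 2 / ((Wᵀ * H * W).trace * H.trace) :=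
  whitened_step_contraction_identity_general H hH W hW hrank
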